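/- arXiv:2309.16847 — 3 statements merged into one kernel-verified Lean document; each statement's English description precedes it below -/
import Mathlib

section
/- Let (I_j)_{j∈[l]} be ideals in a commutative ring such that the concatenation of their chosen generating sets forms a regular sequence in any order. Then the intersection ∩_{j∈[l]} I_j equals the product ∏_{j∈[l]} I_j. -/
/-!
Write `(xs)` for the ideal generated by a list `xs`. Everything rests on one computation: if `t`
is a nonzerodivisor modulo `A + B`, then `A ∩ ((t) + B) = A ∩ B + A·(t)`. Adjoining generators
one at a time, it gives `J ∩ (xs) = J·(xs)` and `((xs) + A) ∩ ((xs) + B) = (xs) + A ∩ B`,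
provided every element of `xs` is a nonzerodivisor modulo `J` (resp. `A + B`) plus the other
elements. Because the pooled generators are regular in every order, the second identity shows
by induction on the number of ideals that `(xs) + ⋂ⱼ Iⱼ = ⋂ⱼ ((xs) + Iⱼ)` for any part `xs` of
the generators of `I₀`; so those generators are nonzerodivisors modulo `⋂_{j>0} Iⱼ` plus the
others, and the first identity gives `I₀ ∩ ⋂_{j>0} Iⱼ = I₀ · ⋂_{j>0} Iⱼ`, where
`⋂_{j>0} Iⱼ = ∏_{j>0} Iⱼ` by induction.
-/

open List RingTheory.Sequence

theorem iInf_fin_succ {α : Type*} [CompleteLattice α] {n : ℕ} (f : Fin (n + 1) → α) :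
    ⨅ j, f j = f 0 ⊓ ⨅ j : Fin n, f j.succ :=
  le_antisymm (le_inf (iInf_le f 0) (le_iInf fun j => iInf_le f j.succ))
    (le_iInf fun j => j.cases inf_le_left fun i => inf_le_right.trans (iInf_le _ i))

namespace List

theorem flatten_ofFn_succ {α : Type*} {n : ℕ} (f : Fin (n + 1) → List α) :
    (ofFn f).flatten = f 0 ++ (ofFn fun j => f j.succ).flatten := by
  rw [ofFn_succ, flatten_cons]

theorem subperm_append_append_singleton {α : Type*} {p q xs ys : List α} {r : α}
    (hp : p ++ [r] <+~ xs) (hq : q <+~ ys) : p ++ q ++ [r] <+~ xs ++ ys := by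
  refine (Perm.subperm ?_).trans (hp.append hq)
  rw [append_assoc, append_assoc]
  exact perm_append_comm.append_left p

end List

namespace Ideal

variable {R : Type*} [CommRing R]

theorem isSMulRegular_quotient_iInf {ι : Type*} {K : ι → Ideal R} {r : R}
    (h : ∀ j, IsSMulRegular (R ⧸ K j) r) : IsSMulRegular (R ⧸ ⨅ j, K j) r := by
  simp only [isSMulRegular_quotient_iff_mem_of_smul_mem, Submodule.mem_iInf] at h ⊢
  exact fun f hf j => h j f (hf j)

theorem isSMulRegular_quotient_ofList_of_isWeaklyRegular {p : List R} {r : R}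
    (h : IsWeaklyRegular R (p ++ [r])) : IsSMulRegular (R ⧸ ofList p) r := by
  rw [isWeaklyRegular_append_iff, isWeaklyRegular_singleton_iff, smul_eq_mul, mul_top] at h
  exact h.2

theorem inf_span_singleton_sup_eq {A B : Ideal R} {t : R}
    (ht : IsSMulRegular (R ⧸ (A ⊔ B)) t) :
    A ⊓ (span {t} ⊔ B) = A ⊓ B ⊔ A * span {t} := by
  refine le_antisymm ?_ (sup_le (inf_le_inf_left A le_sup_right)
    (le_inf mul_le_left (le_sup_of_le_left mul_le_right)))
  intro f hf
  obtain ⟨hfA, hf⟩ := Submodule.mem_inf.mp hf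
  obtain ⟨_, hat, b, hb, rfl⟩ := Submodule.mem_sup.mp hf
  obtain ⟨a, rfl⟩ := mem_span_singleton'.mp hat
  have ha : a ∈ A ⊔ B := by
    refine mem_of_isSMulRegular_quotient_of_smul_mem ht ?_
    rw [smul_eq_mul, mul_comm, show a * t = a * t + b - b by ring]
    exact sub_mem (mem_sup_left hfA) (mem_sup_right hb)
  obtain ⟨i, hi, j, hj, rfl⟩ := Submodule.mem_sup.mp ha
  have hAB : j * t + b ∈ A ⊓ B := Submodule.mem_inf.mpr
    ⟨by convert sub_mem hfA (A.mul_mem_right t hi) using 1; ring,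
      add_mem (B.mul_mem_right t hj) hb⟩
  rw [show (i + j) * t + b = (j * t + b) + i * t by ring]
  exact add_mem (mem_sup_left hAB) (mem_sup_right (mul_mem_mul hi (mem_span_singleton_self t)))

theorem span_singleton_sup_inf_span_singleton_sup {A B : Ideal R} {t : R}
    (ht : IsSMulRegular (R ⧸ (A ⊔ B)) t) :
    (span {t} ⊔ A) ⊓ (span {t} ⊔ B) = span {t} ⊔ A ⊓ B := by
  rw [sup_inf_assoc_of_le A le_sup_left, inf_span_singleton_sup_eq ht, sup_comm (A ⊓ B),
    ← sup_assoc, sup_eq_left.mpr (mul_le_right : A * span {t} ≤ _)]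

theorem inf_span_singleton_sup_eq_mul {J K : Ideal R} {t : R}
    (ht : IsSMulRegular (R ⧸ (J ⊔ K)) t) (hJK : J ⊓ K = J * K) :
    J ⊓ (span {t} ⊔ K) = J * (span {t} ⊔ K) := by
  rw [inf_span_singleton_sup_eq ht, hJK, mul_sup, sup_comm]

-- Equivalently: every ordering of every sub-multiset of `xs` is weakly regular on `R ⧸ J`.
def IsRegularInAnyOrder (J : Ideal R) (xs : List R) : Prop :=
  ∀ p r, p ++ [r] <+~ xs → IsSMulRegular (R ⧸ (J ⊔ ofList p)) r

theorem isRegularInAnyOrder_bot_of_forall_perm {xs : List R}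
    (h : ∀ L, L ~ xs → IsWeaklyRegular R L) : IsRegularInAnyOrder ⊥ xs := by
  rintro p r ⟨q, hq, hqxs⟩
  obtain ⟨l, hl⟩ := hqxs.exists_perm_append
  have hreg := h _ (hl.trans (hq.append_right l)).symm
  rw [isWeaklyRegular_append_iff] at hreg
  rw [bot_sup_eq]
  exact isSMulRegular_quotient_ofList_of_isWeaklyRegular hreg.1

namespace IsRegularInAnyOrder

variable {J : Ideal R} {xs ys : List R}

theorem of_subperm (h : IsRegularInAnyOrder J xs) (hys : ys <+~ xs) :
    IsRegularInAnyOrder J ys :=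
  fun p r hp => h p r (hp.trans hys)

theorem head {t : R} (h : IsRegularInAnyOrder J (t :: xs)) :
    IsSMulRegular (R ⧸ (J ⊔ ofList xs)) t :=
  h xs t (perm_append_singleton t xs).subperm

theorem tail {t : R} (h : IsRegularInAnyOrder J (t :: xs)) : IsRegularInAnyOrder J xs :=
  h.of_subperm (sublist_cons_self t xs).subperm

theorem ofList_sup_inf_ofList_sup {A B : Ideal R} (h : IsRegularInAnyOrder (A ⊔ B) xs) :
    (ofList xs ⊔ A) ⊓ (ofList xs ⊔ B) = ofList xs ⊔ A ⊓ B := by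
  induction xs with
  | nil => simp
  | cons t xs ih =>
    have ht : IsSMulRegular (R ⧸ ((ofList xs ⊔ A) ⊔ (ofList xs ⊔ B))) t := by
      rw [sup_sup_sup_comm, sup_idem, sup_comm]
      exact h.head
    simp only [ofList_cons, sup_assoc]
    rw [span_singleton_sup_inf_span_singleton_sup ht, ih h.tail]

theorem inf_ofList_eq_mul (h : IsRegularInAnyOrder J xs) : J ⊓ ofList xs = J * ofList xs := by
  induction xs with
  | nil => simp
  | cons t xs ih =>
    rw [ofList_cons]
    exact inf_span_singleton_sup_eq_mul h.head (ih h.tail)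

end IsRegularInAnyOrder

theorem isSMulRegular_quotient_iInf_ofList {n : ℕ} {gens : Fin n → List R} {xs p : List R}
    {r : R} (h : IsRegularInAnyOrder ⊥ (xs ++ (ofFn gens).flatten)) (hp : p ++ [r] <+~ xs) :
    IsSMulRegular (R ⧸ ⨅ j, ofList (p ++ gens j)) r := by
  refine isSMulRegular_quotient_iInf fun j => ?_
  have hj := h _ r <| subperm_append_append_singleton hp
    (sublist_flatten_of_mem (mem_ofFn.2 ⟨j, rfl⟩)).subperm
  rwa [bot_sup_eq] at hj

theorem iInf_ofList_append_eq_ofList_sup {n : ℕ} (gens : Fin n → List R) (xs : List R)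
    (h : IsRegularInAnyOrder ⊥ (xs ++ (ofFn gens).flatten)) :
    ⨅ j, ofList (xs ++ gens j) = ofList xs ⊔ ⨅ j, ofList (gens j) := by
  induction n generalizing xs with
  | zero => simp [iInf_of_empty]
  | succ n ih =>
    rw [flatten_ofFn_succ] at h
    have ih_sub : ∀ ys, ys <+~ xs ++ gens 0 →
        ⨅ j : Fin n, ofList (ys ++ gens j.succ) = ofList ys ⊔ ⨅ j : Fin n, ofList (gens j.succ) :=
      fun ys hys => ih _ ys <| h.of_subperm <| by
        rw [← append_assoc]
        exact hys.append (Subperm.refl _)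
    rw [iInf_fin_succ, iInf_fin_succ, ih_sub xs (sublist_append_left _ _).subperm, ofList_append]
    refine IsRegularInAnyOrder.ofList_sup_inf_ofList_sup fun p r hp => ?_
    have hsup : (ofList (gens 0) ⊔ ⨅ j : Fin n, ofList (gens j.succ)) ⊔ ofList p =
        ⨅ j : Fin n, ofList (p ++ gens 0 ++ gens j.succ) := by
      rw [ih_sub _ (((sublist_append_left p [r]).subperm.trans hp).append (Subperm.refl _)),
        ofList_append]
      ac_rfl
    rw [hsup]
    exact isSMulRegular_quotient_iInf_ofList (xs := xs ++ gens 0) (by rwa [append_assoc])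
      (subperm_append_append_singleton hp (Subperm.refl _))

theorem iInf_ofList_eq_prod {n : ℕ} (gens : Fin n → List R)
    (h : IsRegularInAnyOrder ⊥ (ofFn gens).flatten) :
    ⨅ j, ofList (gens j) = ∏ j, ofList (gens j) := by
  induction n with
  | zero => simp [one_eq_top]
  | succ n ih =>
    rw [flatten_ofFn_succ] at h
    rw [iInf_fin_succ, Fin.prod_univ_succ, ← ih _ (h.of_subperm (sublist_append_right _ _).subperm),
      inf_comm, mul_comm]
    refine IsRegularInAnyOrder.inf_ofList_eq_mul fun p r hp => ?_
    have hp_rest : p ++ (ofFn fun j => gens j.succ).flatten <+~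
        gens 0 ++ (ofFn fun j => gens j.succ).flatten :=
      ((sublist_append_left p [r]).subperm.trans hp).append (Subperm.refl _)
    rw [sup_comm, ← iInf_ofList_append_eq_ofList_sup _ _ (h.of_subperm hp_rest)]
    exact isSMulRegular_quotient_iInf_ofList h hp

end Ideal

/-- let `(I_j)_{j ∈ [l]}` be ideals of a commutative ring, each generated
by a finite list `gens j` of elements, such that the concatenation of these generating
lists, in any order, is a regular sequence.  Then `⋂_j I_j = ∏_j I_j`. -/
theorem iInf_eq_prod_of_regular {R : Type*} [CommRing R] {l : ℕ}
    (gens : Fin l → List R) (I : Fin l → Ideal R)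
    (hI : ∀ j, I j = Ideal.ofList (gens j))
    (hreg : ∀ L : List R, L.Perm (List.ofFn gens).flatten →
      RingTheory.Sequence.IsRegular R L) :
    (⨅ j, I j) = ∏ j, I j := by
  obtain rfl : I = fun j => Ideal.ofList (gens j) := funext hI
  exact Ideal.iInf_ofList_eq_prod gens
    (Ideal.isRegularInAnyOrder_bot_of_forall_perm fun L hL => (hreg L hL).toIsWeaklyRegular)
end

section
/- Over an algebraically closed field of characteristic p ≥ 3, the form f(v) = Σ_{i=1}^n v_i^{p+1} has Schmidt rank at least n/2, and its degree-2 Taylor component f^2(w,v) at any point w is identically zero. -/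
open MvPolynomial

/-- `f` is a sum of `r` products of forms of positive degrees summing to `d`. -/
def SRankLE {k : Type*} [Field k] {n : ℕ} (f : MvPolynomial (Fin n) k) (d r : ℕ) : Prop :=
  ∃ g h : Fin r → MvPolynomial (Fin n) k,
    (∀ i, ∃ a b : ℕ, 0 < a ∧ 0 < b ∧ a + b = d ∧
      (g i).IsHomogeneous a ∧ (h i).IsHomogeneous b) ∧
    f = ∑ i, g i * h i

/-- The Schmidt rank of a form of degree `d`, as an extended natural number. -/
noncomputable def srank {k : Type*} [Field k] {n : ℕ}
    (f : MvPolynomial (Fin n) k) (d : ℕ) : ℕ∞ :=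
  sInf {r : ℕ∞ | ∃ m : ℕ, r = m ∧ SRankLE f d m}

/-!
If `f = ∑_{j < r} g_j h_j` with forms of positive degree, the Leibniz rule puts every partial
derivative of `f` in the ideal `I` generated by the `2r` forms `g_j, h_j`, and `I` lies in the
ideal `𝔪 = (X_1, …, X_n)`. For the Fermat form `∂_i f = (p + 1) X_i^p = X_i^p`, so `𝔪` is the
radical of `I`, hence minimal over `I`, and Krull's height theorem bounds its height `n` by `2r`.

For the Taylor component, Frobenius gives `(w + v)^(p+1) = (w^p + v^p)(w + v)`, whose four terms
have degree `0, 1, p, p + 1` in `v`, never `2`.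
-/

theorem Ideal.height_le_card_of_le_radical_span {R ι : Type*} [CommRing R] [IsNoetherianRing R]
    [Fintype ι] (v : ι → R) {P : Ideal R} [P.IsPrime] (hle : span (Set.range v) ≤ P)
    (hrad : P ≤ (span (Set.range v)).radical) : P.height ≤ Fintype.card ι := by
  classical
  have hP : (span (Set.range v)).radical = P :=
    le_antisymm ((Ideal.IsPrime.isRadical ‹_›).radical_le_iff.mpr hle) hrad
  have hmin : P ∈ (span ((Finset.univ.image v : Finset R) : Set R)).minimalPrimes := by
    rw [Finset.coe_image, Finset.coe_univ, Set.image_univ, ← radical_minimalPrimes, hP,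
      minimalPrimes_eq_subsingleton_self]
    rfl
  exact (height_le_card_of_mem_minimalPrimes_span_finset hmin).trans
    (mod_cast Finset.card_image_le)

namespace MvPolynomial

theorem idealOfVars_eq_ker_constantCoeff {σ R : Type*} [CommSemiring R] :
    idealOfVars σ R = RingHom.ker (constantCoeff : MvPolynomial σ R →+* R) := by
  ext q
  rw [← pow_one (idealOfVars σ R), mem_pow_idealOfVars_iff', RingHom.mem_ker, constantCoeff_eq]
  simp only [Nat.lt_one_iff, Finsupp.degree_eq_zero_iff, forall_eq]

theorem isMaximal_idealOfVars (σ k : Type*) [Field k] : (idealOfVars σ k).IsMaximal := by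
  rw [idealOfVars_eq_ker_constantCoeff]
  exact RingHom.ker_isMaximal_of_surjective _ fun a => ⟨C a, constantCoeff_C _ _⟩

theorem IsHomogeneous.mem_idealOfVars {σ R : Type*} [CommSemiring R] {g : MvPolynomial σ R}
    {a : ℕ} (hg : g.IsHomogeneous a) (ha : 0 < a) : g ∈ idealOfVars σ R := by
  rw [idealOfVars_eq_ker_constantCoeff, RingHom.mem_ker, constantCoeff_eq]
  exact hg.coeff_eq_zero (by simpa using ha.ne)

theorem height_idealOfVars (k : Type*) [Field k] (n : ℕ) :
    (idealOfVars (Fin n) k).height = n := by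
  induction n with
  | zero => simp [idealOfVars]
  | succ n ih =>
    -- `finSuccEquiv` carries `𝔪_{n+1}` to a maximal ideal of `k[X_1, …, X_n][X]` over `𝔪_n`.
    set e := (finSuccEquiv k n).toRingEquiv
    have := isMaximal_idealOfVars (Fin (n + 1)) k
    have : (Ideal.map e (idealOfVars (Fin (n + 1)) k)).IsMaximal := Ideal.map_isMaximal_of_equiv e
    have : (Ideal.map e (idealOfVars (Fin (n + 1)) k)).LiesOver (idealOfVars (Fin n) k) := by
      refine ⟨(isMaximal_idealOfVars (Fin n) k).eq_of_le (Ideal.IsPrime.ne_top inferInstance) ?_⟩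
      rw [Ideal.span_le, Set.range_subset_iff]
      intro i
      have hC : Polynomial.C (X i) = e (X i.succ) := finSuccEquiv_X_succ.symm
      rw [SetLike.mem_coe, Ideal.under, Ideal.mem_comap, Polynomial.algebraMap_eq, hC]
      exact Ideal.mem_map_of_mem e (Ideal.subset_span (Set.mem_range_self i.succ))
    rw [← e.height_map, Polynomial.height_eq_height_add_one (idealOfVars (Fin n) k), ih]
    norm_cast

theorem pderiv_sum_mul_mem_span {σ R ι : Type*} [CommRing R] [Fintype ι]
    (g h : ι → MvPolynomial σ R) (i : σ) :
    pderiv i (∑ j, g j * h j) ∈ Ideal.span (Set.range (Sum.elim g h)) := by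
  rw [map_sum]
  refine Ideal.sum_mem _ fun j _ => ?_
  rw [Derivation.leibniz, smul_eq_mul, smul_eq_mul]
  exact Ideal.add_mem _ (Ideal.mul_mem_right _ _ (Ideal.subset_span ⟨Sum.inl j, rfl⟩))
    (Ideal.mul_mem_right _ _ (Ideal.subset_span ⟨Sum.inr j, rfl⟩))

theorem pderiv_sum_X_pow_char_succ {σ k : Type*} [Fintype σ] [CommRing k] {p : ℕ} [CharP k p]
    (i : σ) : pderiv i (∑ t : σ, (X t : MvPolynomial σ k) ^ (p + 1)) = X i ^ p := by
  classical
  rw [map_sum, Finset.sum_eq_single i (fun t _ ht => by simp [pderiv_X_of_ne ht]) (by simp)]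
  simp

end MvPolynomial

theorem le_two_mul_of_sRankLE {k : Type*} [Field k] {n d r : ℕ} {f : MvPolynomial (Fin n) k}
    (hf : SRankLE f d r)
    (hsing : idealOfVars (Fin n) k ≤ (Ideal.span (Set.range fun i => pderiv i f)).radical) :
    n ≤ 2 * r := by
  obtain ⟨g, h, hdeg, rfl⟩ := hf
  have hgen : Ideal.span (Set.range (Sum.elim g h)) ≤ idealOfVars (Fin n) k := by
    rw [Ideal.span_le, Set.range_subset_iff]
    rintro (j | j) <;> obtain ⟨a, b, ha, hb, -, hga, hhb⟩ := hdeg j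
    exacts [hga.mem_idealOfVars ha, hhb.mem_idealOfVars hb]
  have hpartials : Ideal.span (Set.range fun i => pderiv i (∑ j, g j * h j)) ≤
      Ideal.span (Set.range (Sum.elim g h)) := by
    rw [Ideal.span_le, Set.range_subset_iff]
    exact pderiv_sum_mul_mem_span g h
  have := isMaximal_idealOfVars (Fin n) k
  have hheight := Ideal.height_le_card_of_le_radical_span (Sum.elim g h) hgen
    (hsing.trans (Ideal.radical_mono hpartials))
  rw [height_idealOfVars, Fintype.card_sum, Fintype.card_fin] at hheight
  norm_cast at hheight
  omega

theorem le_two_mul_srank {k : Type*} [Field k] {n d N : ℕ} {f : MvPolynomial (Fin n) k}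
    (h : ∀ r, SRankLE f d r → N ≤ 2 * r) : (N : ℕ∞) ≤ 2 * srank f d := by
  rcases Set.eq_empty_or_nonempty {r : ℕ∞ | ∃ m : ℕ, r = m ∧ SRankLE f d m} with hS | hS
  · simp [srank, hS]
  · obtain ⟨m, hm, hr⟩ := csInf_mem hS
    rw [srank, hm]
    exact_mod_cast h m hr

theorem add_pow_char_succ {R : Type*} [CommRing R] {p : ℕ} [Fact p.Prime] [CharP R p] (x y : R) :
    (x + y) ^ (p + 1) = x ^ (p + 1) + x ^ p * y + x * y ^ p + y ^ (p + 1) := by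
  rw [pow_succ, add_pow_char]
  ring

theorem weightedHomogeneousComponent_two_sum_add_pow_char_succ {k : Type*} [CommRing k] {p : ℕ}
    [Fact p.Prime] [CharP k p] (hp : 3 ≤ p) (n : ℕ) :
    weightedHomogeneousComponent
        (Sum.elim (fun _ => 0) (fun _ => 1) : Fin n ⊕ Fin n → ℕ) 2
        (∑ i : Fin n,
          ((X (Sum.inl i) + X (Sum.inr i) : MvPolynomial (Fin n ⊕ Fin n) k) ^ (p + 1)))
      = 0 := by
  set w : Fin n ⊕ Fin n → ℕ := Sum.elim (fun _ => 0) (fun _ => 1)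
  refine (map_sum _ _ _).trans (Finset.sum_eq_zero fun i _ => ?_)
  have hx := isWeightedHomogeneous_X k w (Sum.inl i)
  have hy := isWeightedHomogeneous_X k w (Sum.inr i)
  rw [add_pow_char_succ, map_add, map_add, map_add,
    (hx.pow _).weightedHomogeneousComponent_ne 2 (by simp [w]),
    ((hx.pow _).mul hy).weightedHomogeneousComponent_ne 2 (by simp [w]),
    (hx.mul (hy.pow _)).weightedHomogeneousComponent_ne 2 (by simp [w]; omega),
    (hy.pow _).weightedHomogeneousComponent_ne 2 (by simp [w]; omega), add_zero, add_zero,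
    add_zero]

theorem fermat_pPlusOne_rank_and_taylor_general {k : Type*} [Field k]
    {p : ℕ} [CharP k p] (hp : 3 ≤ p) (n : ℕ) :
    (n : ℕ∞) ≤ 2 * srank (∑ i : Fin n, (X i : MvPolynomial (Fin n) k) ^ (p + 1)) (p + 1) ∧
    weightedHomogeneousComponent
        (Sum.elim (fun _ => 0) (fun _ => 1) : Fin n ⊕ Fin n → ℕ) 2
        (∑ i : Fin n,
          ((X (Sum.inl i) + X (Sum.inr i) : MvPolynomial (Fin n ⊕ Fin n) k) ^ (p + 1)))
      = 0 := by
  have := Fact.mk (CharP.char_is_prime_of_two_le k p (by omega))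
  have hsing : idealOfVars (Fin n) k ≤ (Ideal.span (Set.range fun i =>
      pderiv i (∑ t : Fin n, (X t : MvPolynomial (Fin n) k) ^ (p + 1)))).radical := by
    rw [Ideal.span_le, Set.range_subset_iff]
    exact fun i => ⟨p, Ideal.subset_span ⟨i, pderiv_sum_X_pow_char_succ i⟩⟩
  exact ⟨le_two_mul_srank fun r hr => le_two_mul_of_sRankLE hr hsing,
    weightedHomogeneousComponent_two_sum_add_pow_char_succ hp n⟩

/-- over an algebraically closed field of characteristic `p ≥ 3`, the form
`f(v) = ∑ᵢ vᵢ^(p+1)` has Schmidt rank at least `n/2` (stated as `n ≤ 2·rk f`), and the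
degree-2 Taylor component `f²(w,v)` (the part of `f(w+v)` of degree 2 in `v`) vanishes
identically. -/
theorem fermat_pPlusOne_rank_and_taylor {k : Type*} [Field k] [IsAlgClosed k]
    {p : ℕ} [CharP k p] (hp : 3 ≤ p) (n : ℕ) :
    (n : ℕ∞) ≤ 2 * srank (∑ i : Fin n, (X i : MvPolynomial (Fin n) k) ^ (p + 1)) (p + 1) ∧
    weightedHomogeneousComponent
        (Sum.elim (fun _ => 0) (fun _ => 1) : Fin n ⊕ Fin n → ℕ) 2
        (∑ i : Fin n,
          ((X (Sum.inl i) + X (Sum.inr i) : MvPolynomial (Fin n ⊕ Fin n) k) ^ (p + 1)))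
      = 0 :=
  fermat_pPlusOne_rank_and_taylor_general hp n
end

section
/- Let F be a homogeneous form f ∈ k[x_1,...,x_n] over a field k, and suppose f = Σ_{i=1}^r p_i q_i modulo the ideal generated by forms g_1,...,g_s, with p_i, q_i forms of positive degree. Then the common zero set X(g_1,...,g_s) ∩ {p_i = q_i = 0 for all i} is contained in X(g) ∩ S(f, g_1,...,g_s), the locus in X where the gradients of f, g_1,...,g_s are linearly dependent. -/
open MvPolynomial

/-- The gradient of `f` at `x`. -/
noncomputable def grad {k : Type*} [Field k] {n : ℕ}
    (f : MvPolynomial (Fin n) k) (x : Fin n → k) : Fin n → k :=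
  fun i => eval x (pderiv i f)

/-- if a form `f` satisfies `f = ∑ᵢ pᵢ qᵢ` modulo the ideal generated by
forms `g₁,…,g_s`, with `pᵢ, qᵢ` forms of positive degree, then
`X(g₁,…,g_s) ∩ {pᵢ = qᵢ = 0 ∀i}` is contained in the locus of points of `X(g₁,…,g_s)`
where the gradients `∇f, ∇g₁, …, ∇g_s` are linearly dependent. -/
theorem zero_locus_subset_singular_locus {k : Type*} [Field k] [IsAlgClosed k]
    {n s r : ℕ}
    (f : MvPolynomial (Fin n) k) (hf : ∃ d : ℕ, f.IsHomogeneous d)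
    (g : Fin s → MvPolynomial (Fin n) k)
    (hg : ∀ j, ∃ e : ℕ, (g j).IsHomogeneous e)
    (p q : Fin r → MvPolynomial (Fin n) k)
    (hp : ∀ i, ∃ a : ℕ, 0 < a ∧ (p i).IsHomogeneous a)
    (hq : ∀ i, ∃ b : ℕ, 0 < b ∧ (q i).IsHomogeneous b)
    (hmod : f - ∑ i, p i * q i ∈ Ideal.span (Set.range g)) :
    {x : Fin n → k | (∀ j, eval x (g j) = 0) ∧ ∀ i, eval x (p i) = 0 ∧ eval x (q i) = 0}
      ⊆ {x : Fin n → k | (∀ j, eval x (g j) = 0) ∧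
          ¬ LinearIndependent k
            (Fin.cons (grad f x) (fun j => grad (g j) x) : Fin (s + 1) → Fin n → k)} := by
  rintro x ⟨hxg, hxpq⟩
  refine ⟨hxg, ?_⟩
  rw [linearIndependent_fin_cons]
  rintro ⟨-, hns⟩
  apply hns
  obtain ⟨c, hc⟩ := (Submodule.mem_span_range_iff_exists_fun _).mp hmod
  have hfe : f = ∑ i, p i * q i + ∑ j, c j • g j := by rw [hc]; ring
  have key : grad f x = ∑ j, eval x (c j) • grad (g j) x := by
    funext i
    simp only [grad, hfe, map_add, map_sum, pderiv_mul, smul_eq_mul, map_mul,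
      (hxpq _).1, (hxpq _).2, hxg, mul_zero, zero_mul, add_zero, zero_add,
      Finset.sum_const_zero, Finset.sum_apply, Pi.smul_apply]
  rw [key]
  exact Submodule.sum_mem _ fun j _ =>
    Submodule.smul_mem _ _ (Submodule.subset_span ⟨j, rfl⟩)
end
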